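/- arXiv:1305.6018 — 2 statements merged into one kernel-verified Lean document; each statement's English description precedes it below -/
import Mathlib

section
/- For every positive integer k, (1/k) · Σ_{j=1}^{k} (log j) · c_k(j) = Λ(k) + Σ_{d | k} (μ(d)/d) · log(d!), where Λ is the von Mangoldt function and μ is the Möbius function. -/
/-!
Möbius inversion of the coprimality condition and orthogonality of roots of unity give
Hölder's formula `c_k(j) = ∑_{ed = k, e ∣ j} e μ(d)`. Hence
`∑_{j ≤ k} log j · c_k(j) = ∑_{ed = k} e μ(d) ∑_{t ≤ d} log (et)`
`= ∑_{ed = k} e μ(d) (d log e + log d!)`, and after dividing by `k = ed` the first part is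
`(log * μ)(k) = Λ(k)`.
-/

open Finset ArithmeticFunction

/-- The Ramanujan sum `c_k(j) = ∑_{1 ≤ m ≤ k, gcd(m,k)=1} exp(2πimj/k)`. -/
noncomputable def ramanujanSum (k : ℕ) (j : ℤ) : ℂ :=
  ∑ m ∈ (Finset.Icc 1 k).filter (fun m => Nat.gcd m k = 1),
    Complex.exp (2 * (Real.pi : ℂ) * Complex.I * (m : ℂ) * (j : ℂ) / (k : ℂ))

open scoped ArithmeticFunction.Moebius

theorem Nat.sum_Icc_filter_dvd {M : Type*} [AddCommMonoid M] (f : ℕ → M) (k d : ℕ) :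
    ∑ m ∈ Icc 1 k with d ∣ m, f m = ∑ t ∈ Icc 1 (k / d), f (d * t) := by
  rcases Nat.eq_zero_or_pos d with rfl | hd
  · rw [filter_false_of_mem fun m hm => by simp at hm ⊢; omega]
    simp
  have : {m ∈ Icc 1 k | d ∣ m} = (Icc 1 (k / d)).image (d * ·) := by
    ext m
    simp only [mem_filter, mem_Icc, mem_image, Nat.le_div_iff_mul_le hd]
    constructor
    · rintro ⟨⟨h1, hk⟩, t, rfl⟩
      exact ⟨t, ⟨Nat.pos_of_mul_pos_left h1, by linarith [mul_comm d t]⟩, rfl⟩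
    · rintro ⟨t, ⟨h1, hk⟩, rfl⟩
      exact ⟨⟨Nat.mul_pos hd h1, by linarith [mul_comm d t]⟩, dvd_mul_right d t⟩
  rw [this, sum_image fun a _ b _ h => Nat.eq_of_mul_eq_mul_left hd h]

theorem sum_divisors_moebius_filter_dvd {R : Type*} [Ring R] {k : ℕ} (hk : k ≠ 0) (m : ℕ) :
    ∑ d ∈ k.divisors with d ∣ m, (μ d : R) = if Nat.Coprime m k then 1 else 0 := by
  have : {d ∈ k.divisors | d ∣ m} = (m.gcd k).divisors := by
    ext d
    simp [Nat.dvd_gcd_iff, hk, and_comm, Nat.gcd_ne_zero_right hk]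
  have h := congrArg (· (m.gcd k)) (coe_moebius_mul_coe_zeta (R := R))
  simp only [coe_mul_zeta_apply, intCoe_apply, one_apply] at h
  rw [this, h]

theorem Real.log_factorial (n : ℕ) : Real.log n.factorial = ∑ t ∈ Icc 1 n, Real.log t := by
  induction n with
  | zero => simp
  | succ n ih =>
    rw [sum_Icc_succ_top (by omega), ← ih, Nat.factorial_succ, Nat.cast_mul,
      Real.log_mul (by positivity) (by positivity), add_comm]

theorem Real.sum_Icc_log_mul (e n : ℕ) (he : e ≠ 0) :
    ∑ t ∈ Icc 1 n, Real.log (e * t : ℕ) = n * Real.log e + Real.log n.factorial := by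
  have h : ∀ t ∈ Icc 1 n, Real.log (e * t : ℕ) = Real.log e + Real.log t := fun t ht => by
    rw [Nat.cast_mul, Real.log_mul (by exact_mod_cast he)
      (Nat.cast_ne_zero.2 (Nat.one_le_iff_ne_zero.1 (mem_Icc.1 ht).1))]
  rw [sum_congr rfl h, sum_add_distrib, sum_const, Nat.card_Icc, Real.log_factorial,
    nsmul_eq_mul, Nat.add_sub_cancel]

theorem Complex.sum_Icc_exp_two_pi_I_mul_div (n : ℕ) (j : ℤ) :
    ∑ t ∈ Icc 1 n, Complex.exp (2 * Real.pi * Complex.I * t * j / n) =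
      if (n : ℤ) ∣ j then (n : ℂ) else 0 := by
  rcases eq_or_ne n 0 with rfl | hn
  · simp
  set z := Complex.exp (2 * Real.pi * Complex.I * j / n)
  have hpow (t : ℕ) : Complex.exp (2 * Real.pi * Complex.I * t * j / n) = z ^ t := by
    rw [← Complex.exp_nat_mul]
    ring_nf
  simp_rw [hpow]
  split_ifs with hdvd
  · obtain ⟨m, rfl⟩ := hdvd
    have hz : z = 1 := by
      rw [← Complex.exp_int_mul_two_pi_mul_I m]
      simp only [z]
      congr 1
      push_cast
      field_simp
    simp [hz]
  · have hz : z ≠ 1 := by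
      rw [Ne, Complex.exp_eq_one_iff]
      rintro ⟨m, hm⟩
      refine hdvd ⟨m, ?_⟩
      field_simp at hm
      exact_mod_cast (by linear_combination hm : (j : ℂ) = n * m)
    have hzn : z ^ n = 1 := by
      rw [← Complex.exp_nat_mul, ← Complex.exp_int_mul_two_pi_mul_I j]
      field_simp
    rw [← Ico_add_one_right_eq_Icc, sum_Ico_eq_sum_range, Nat.add_sub_cancel]
    simp_rw [pow_add, pow_one, ← mul_sum, geom_sum_eq hz, hzn]
    simp

theorem sum_Icc_filter_dvd_exp_two_pi_I_mul_div {d k : ℕ} (hd : d ∣ k) (j : ℤ) :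
    ∑ m ∈ Icc 1 k with d ∣ m, Complex.exp (2 * Real.pi * Complex.I * m * j / k) =
      if ((k / d : ℕ) : ℤ) ∣ j then ((k / d : ℕ) : ℂ) else 0 := by
  rcases eq_or_ne d 0 with rfl | hd0
  · simp [Nat.zero_dvd.1 hd]
  obtain ⟨e, rfl⟩ := hd
  rw [Nat.sum_Icc_filter_dvd, ← Complex.sum_Icc_exp_two_pi_I_mul_div,
    Nat.mul_div_cancel_left _ (Nat.pos_of_ne_zero hd0)]
  refine sum_congr rfl fun t _ => congrArg Complex.exp ?_
  have : (d : ℂ) ≠ 0 := by exact_mod_cast hd0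
  push_cast
  field_simp

theorem ramanujanSum_eq_sum_divisorsAntidiagonal (k : ℕ) (j : ℤ) :
    ramanujanSum k j =
      ((∑ x ∈ k.divisorsAntidiagonal with (x.1 : ℤ) ∣ j, x.1 * μ x.2 : ℤ) : ℂ) := by
  rcases eq_or_ne k 0 with rfl | hk
  · simp [ramanujanSum]
  calc ramanujanSum k j
      = ∑ m ∈ Icc 1 k, (∑ d ∈ k.divisors with d ∣ m, (μ d : ℂ)) *
          Complex.exp (2 * Real.pi * Complex.I * m * j / k) := by
        simp_rw [sum_divisors_moebius_filter_dvd hk, ite_mul, one_mul, zero_mul, ← sum_filter]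
        rfl
    _ = ∑ d ∈ k.divisors, (μ d : ℂ) *
          ∑ m ∈ Icc 1 k with d ∣ m, Complex.exp (2 * Real.pi * Complex.I * m * j / k) := by
        simp_rw [sum_filter, sum_mul, mul_sum, ite_mul, mul_ite, zero_mul, mul_zero]
        exact sum_comm
    _ = ∑ d ∈ k.divisors, (μ d : ℂ) *
          if ((k / d : ℕ) : ℤ) ∣ j then ((k / d : ℕ) : ℂ) else 0 := by
        refine sum_congr rfl fun d hd => ?_
        rw [sum_Icc_filter_dvd_exp_two_pi_I_mul_div (Nat.dvd_of_mem_divisors hd)]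
    _ = _ := by
        rw [← Nat.sum_divisorsAntidiagonal' (fun e d => (μ d : ℂ) *
          if (e : ℤ) ∣ j then (e : ℂ) else 0), sum_filter]
        push_cast
        simp_rw [mul_ite, mul_zero, mul_comm]

theorem sum_Icc_log_mul_sum_filter_dvd (k : ℕ) :
    ∑ j ∈ Icc 1 k, Real.log j *
        ∑ x ∈ k.divisorsAntidiagonal with x.1 ∣ j, (x.1 * μ x.2 : ℝ) =
      ∑ x ∈ k.divisorsAntidiagonal,
        x.1 * μ x.2 * (x.2 * Real.log x.1 + Real.log x.2.factorial) := by
  simp_rw [sum_filter, mul_sum, mul_ite, mul_zero]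
  rw [sum_comm]
  refine sum_congr rfl fun x hx => ?_
  obtain ⟨rfl, hk⟩ := Nat.mem_divisorsAntidiagonal.1 hx
  rw [← sum_filter, ← sum_mul, mul_comm, Nat.sum_Icc_filter_dvd (fun j => Real.log j),
    Nat.mul_div_cancel_left _ (Nat.pos_of_ne_zero (left_ne_zero_of_mul hk)),
    Real.sum_Icc_log_mul _ _ (left_ne_zero_of_mul hk)]

theorem one_div_mul_sum_divisorsAntidiagonal_eq_vonMangoldt_add (k : ℕ) :
    (1 / k : ℝ) * ∑ x ∈ k.divisorsAntidiagonal,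
        x.1 * μ x.2 * (x.2 * Real.log x.1 + Real.log x.2.factorial) =
      Λ k + ∑ d ∈ k.divisors, (μ d / d : ℝ) * Real.log d.factorial := by
  rw [mul_sum]
  calc _ = ∑ x ∈ k.divisorsAntidiagonal,
        (Real.log x.1 * μ x.2 + (μ x.2 / x.2 : ℝ) * Real.log x.2.factorial) := by
        refine sum_congr rfl fun x hx => ?_
        obtain ⟨rfl, hk⟩ := Nat.mem_divisorsAntidiagonal.1 hx
        have h1 : (x.1 : ℝ) ≠ 0 := by exact_mod_cast left_ne_zero_of_mul hk
        have h2 : (x.2 : ℝ) ≠ 0 := by exact_mod_cast right_ne_zero_of_mul hk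
        push_cast
        field_simp
    _ = _ := by
        rw [sum_add_distrib, ← log_mul_moebius_eq_vonMangoldt, mul_apply,
          Nat.sum_divisorsAntidiagonal' (fun _ d => (μ d / d : ℝ) * Real.log d.factorial)]
        simp [log_apply]

theorem log_weighted_average_ramanujan_sum_general (k : ℕ) :
    (1 / (k : ℂ)) * ∑ j ∈ Finset.Icc 1 k, (Real.log j : ℂ) * ramanujanSum k j =
      (ArithmeticFunction.vonMangoldt k : ℂ) +
        ∑ d ∈ k.divisors, ((moebius d : ℂ) / (d : ℂ)) * (Real.log (Nat.factorial d) : ℂ) := by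
  have h := one_div_mul_sum_divisorsAntidiagonal_eq_vonMangoldt_add k
  rw [← sum_Icc_log_mul_sum_filter_dvd] at h
  simp_rw [ramanujanSum_eq_sum_divisorsAntidiagonal, Int.natCast_dvd_natCast]
  apply_fun ((↑) : ℝ → ℂ) at h
  push_cast at h ⊢
  exact h

theorem log_weighted_average_ramanujan_sum (k : ℕ) (hk : 0 < k) :
    (1 / (k : ℂ)) * ∑ j ∈ Finset.Icc 1 k, (Real.log j : ℂ) * ramanujanSum k j =
      (ArithmeticFunction.vonMangoldt k : ℂ) +
        ∑ d ∈ k.divisors, ((moebius d : ℂ) / (d : ℂ)) * (Real.log (Nat.factorial d) : ℂ) :=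
  log_weighted_average_ramanujan_sum_general k
end

section
/- For every positive integers k and m, Σ_{j=0}^{k−1} B_m(j/k) · c_k(j) = (B_m / k^{m−1}) · J_m(k), where B_m(x) is the m-th Bernoulli polynomial, B_m = B_m(0) is the m-th Bernoulli number, and J_m(k) = Σ_{d | k} μ(k/d) d^m is the Jordan totient function of order m. -/
/-!
Kluyver's formula `c_k(j) = ∑_{d ∣ k, d ∣ j} μ(k/d) d` (expand `[gcd(a, k) = 1]` by Möbius
inversion, then use that a complete sum of `q`-th roots of unity `ζ^s` is `q` or `0` according
as `ζ = 1` or not) turns the left side into `∑_{d ∣ k} μ(k/d) d ∑_{t < k/d} B_m(t/(k/d))`.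
Raabe's multiplication formula `q^m ∑_{t < q} B_m(x + t/q) = q B_m(qx)`, which follows from the
generating function `X e^{xX}/(e^X - 1)` and `e^X - 1 = (e^{X/q} - 1) ∑_{t < q} e^{tX/q}`,
evaluates each inner sum as `q^{1-m} B_m`.
-/

open Finset ArithmeticFunction

namespace PowerSeries

variable {A : Type*} [CommRing A] [Algebra ℚ A]

theorem rescale_exp_pow (a : A) (n : ℕ) : rescale a (exp A) ^ n = rescale (n * a) (exp A) := by
  rw [← map_pow, exp_pow_eq_rescale_exp, rescale_rescale]

theorem rescale_exp_sub_one_ne_zero {a : A} (ha : a ≠ 0) : rescale a (exp A) - 1 ≠ 0 := by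
  intro h
  simpa [coeff_rescale, coeff_exp, ha] using congrArg (coeff 1) h

end PowerSeries

namespace Polynomial

open PowerSeries (exp rescale)

noncomputable def bernoulliEGF (x : ℚ) : PowerSeries ℚ :=
  PowerSeries.mk fun j => (bernoulli j).eval x / j.factorial

theorem bernoulliEGF_mul_exp_sub_one (x : ℚ) :
    bernoulliEGF x * (exp ℚ - 1) = PowerSeries.X * rescale x (exp ℚ) := by
  convert bernoulli_generating_function x using 3
  ext j
  simp [bernoulliEGF, div_eq_inv_mul]

theorem sum_bernoulliEGF_add_div {n : ℕ} (hn : n ≠ 0) (x : ℚ) :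
    ∑ t ∈ range n, bernoulliEGF (x + t / n) =
      PowerSeries.C (n : ℚ) * rescale (n : ℚ)⁻¹ (bernoulliEGF (n * x)) := by
  have hn' : (n : ℚ) ≠ 0 := Nat.cast_ne_zero.2 hn
  set E := rescale (n : ℚ)⁻¹ (exp ℚ)
  have hgeom : exp ℚ - 1 = (∑ t ∈ range n, E ^ t) * (E - 1) := by
    rw [geom_sum_mul, PowerSeries.rescale_exp_pow, mul_inv_cancel₀ hn', PowerSeries.rescale_one,
      RingHom.id_apply]
  have hsum : (∑ t ∈ range n, bernoulliEGF (x + t / n)) * (exp ℚ - 1) =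
      PowerSeries.X * rescale x (exp ℚ) * ∑ t ∈ range n, E ^ t := by
    rw [sum_mul, mul_sum]
    refine sum_congr rfl fun t _ => ?_
    rw [bernoulliEGF_mul_exp_sub_one, PowerSeries.rescale_exp_pow, mul_assoc,
      PowerSeries.exp_mul_exp_eq_exp_add, div_eq_mul_inv]
  have hscaled := congrArg (rescale (n : ℚ)⁻¹) (bernoulliEGF_mul_exp_sub_one (n * x))
  rw [map_mul, map_mul, map_sub, map_one, PowerSeries.rescale_X, PowerSeries.rescale_rescale,
    show (n : ℚ) * x * (n : ℚ)⁻¹ = x by field_simp] at hscaled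
  have hC : PowerSeries.C (n : ℚ) * PowerSeries.C (n : ℚ)⁻¹ = 1 := by
    rw [← map_mul, mul_inv_cancel₀ hn', map_one]
  have hexp : exp ℚ - 1 ≠ 0 := by
    simpa using PowerSeries.rescale_exp_sub_one_ne_zero (one_ne_zero (α := ℚ))
  refine mul_right_cancel₀ hexp (hsum.trans ?_)
  rw [hgeom]
  linear_combination (-PowerSeries.C (n : ℚ) * ∑ t ∈ range n, E ^ t) * hscaled -
    (PowerSeries.X * rescale x (exp ℚ) * ∑ t ∈ range n, E ^ t) * hC

theorem pow_mul_sum_bernoulli_eval_add_div (m n : ℕ) (x : ℚ) :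
    (n : ℚ) ^ m * ∑ t ∈ range n, (bernoulli m).eval (x + t / n) =
      n * (bernoulli m).eval (n * x) := by
  rcases eq_or_ne n 0 with rfl | hn
  · simp
  have hcoeff := congrArg (PowerSeries.coeff m) (sum_bernoulliEGF_add_div hn x)
  simp only [bernoulliEGF, map_sum, PowerSeries.coeff_mk, PowerSeries.coeff_C_mul,
    PowerSeries.coeff_rescale, ← sum_div] at hcoeff
  generalize ∑ t ∈ range n, (bernoulli m).eval (x + t / n) = S at hcoeff ⊢
  generalize (bernoulli m).eval (n * x) = b at hcoeff ⊢
  rw [inv_pow] at hcoeff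
  field_simp at hcoeff
  linear_combination hcoeff

end Polynomial

theorem ArithmeticFunction.sum_divisors_moebius {R : Type*} [Ring R] (n : ℕ) :
    ∑ d ∈ n.divisors, (moebius d : R) = if n = 1 then 1 else 0 := by
  simpa only [coe_mul_zeta_apply, intCoe_apply, one_apply] using
    congrArg (· n) (coe_moebius_mul_coe_zeta (R := R))

theorem Finset.sum_filter_coprime_eq_sum_divisors_moebius {R : Type*} [CommRing R] {k : ℕ}
    (hk : k ≠ 0) (s : Finset ℕ) (f : ℕ → R) :
    ∑ a ∈ s with a.Coprime k, f a =
      ∑ d ∈ k.divisors, (moebius d : R) * ∑ a ∈ s with d ∣ a, f a := by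
  simp_rw [mul_sum, sum_filter]
  rw [sum_comm]
  refine sum_congr rfl fun a _ => ?_
  have hdivisors : {d ∈ k.divisors | d ∣ a} = (a.gcd k).divisors := by
    rw [← Nat.divisors_filter_dvd_of_dvd hk (Nat.gcd_dvd_right a k)]
    exact filter_congr fun d hd => by simp [Nat.dvd_gcd_iff, Nat.dvd_of_mem_divisors hd]
  rw [← sum_filter, ← sum_mul, hdivisors, sum_divisors_moebius, ite_mul, one_mul, zero_mul]

theorem Finset.sum_filter_dvd_range_mul {M : Type*} [AddCommMonoid M] {d : ℕ} (hd : d ≠ 0)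
    (q : ℕ) (f : ℕ → M) :
    ∑ j ∈ range (d * q) with d ∣ j, f j = ∑ t ∈ range q, f (d * t) := by
  have hd' : 0 < d := Nat.pos_of_ne_zero hd
  rw [← sum_image fun _ _ _ _ h => Nat.eq_of_mul_eq_mul_left hd' h]
  congr 1
  ext j
  simp only [mem_filter, mem_range, mem_image]
  constructor
  · rintro ⟨hj, t, rfl⟩
    exact ⟨t, Nat.lt_of_mul_lt_mul_left hj, rfl⟩
  · rintro ⟨t, ht, rfl⟩
    exact ⟨Nat.mul_lt_mul_of_pos_left ht hd', dvd_mul_right d t⟩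

theorem Finset.sum_filter_dvd_Icc_mul {M : Type*} [AddCommMonoid M] {d : ℕ} (hd : d ≠ 0)
    (q : ℕ) (f : ℕ → M) :
    ∑ a ∈ Icc 1 (d * q) with d ∣ a, f a = ∑ s ∈ Icc 1 q, f (d * s) := by
  have hd' : 0 < d := Nat.pos_of_ne_zero hd
  rw [← sum_image fun _ _ _ _ h => Nat.eq_of_mul_eq_mul_left hd' h]
  congr 1
  ext a
  simp only [mem_filter, mem_Icc, mem_image]
  constructor
  · rintro ⟨⟨ha, hadq⟩, s, rfl⟩
    exact ⟨s, ⟨Nat.pos_of_mul_pos_left ha, Nat.le_of_mul_le_mul_left hadq hd'⟩, rfl⟩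
  · rintro ⟨s, ⟨hs, hsq⟩, rfl⟩
    exact ⟨⟨Nat.mul_pos hd' hs, Nat.mul_le_mul_left d hsq⟩, dvd_mul_right d s⟩

theorem sum_Icc_pow_eq_ite_of_pow_eq_one {K : Type*} [Field K] [DecidableEq K] {x : K} {q : ℕ}
    (hx : x ^ q = 1) : ∑ s ∈ Icc 1 q, x ^ s = if x = 1 then (q : K) else 0 := by
  split_ifs with h
  · simp [h]
  rw [← Ico_add_one_right_eq_Icc, geom_sum_Ico h (Nat.le_add_left 1 q), pow_succ, hx,
    one_mul, pow_one, sub_self, zero_div]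

open Complex Real in
theorem Complex.sum_Icc_exp_eq_ite (q : ℕ) (j : ℤ) :
    ∑ s ∈ Icc 1 q, exp (2 * π * I * s * j / q) = if (q : ℤ) ∣ j then (q : ℂ) else 0 := by
  rcases eq_or_ne q 0 with rfl | hq
  · simp
  have hζ := isPrimitiveRoot_exp q hq
  have hterm : ∀ s : ℕ, exp (2 * π * I * s * j / q) = (exp (2 * π * I / q) ^ j) ^ s := by
    intro s
    rw [← zpow_natCast, ← zpow_mul, ← exp_int_mul]
    congr 1
    push_cast
    ring
  simp_rw [hterm]
  rw [sum_Icc_pow_eq_ite_of_pow_eq_one]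
  · simp only [hζ.zpow_eq_one_iff_dvd]
  · rw [← zpow_natCast, ← zpow_mul, hζ.zpow_eq_one_iff_dvd]
    exact dvd_mul_left _ _

theorem ramanujanSum_eq_sum_divisors (k : ℕ) (j : ℤ) :
    ramanujanSum k j =
      ∑ d ∈ k.divisors, (moebius (k / d) : ℂ) * if (d : ℤ) ∣ j then (d : ℂ) else 0 := by
  rcases eq_or_ne k 0 with rfl | hk
  · simp [ramanujanSum]
  calc ramanujanSum k j
      = ∑ d ∈ k.divisors, (moebius d : ℂ) *
          if ((k / d : ℕ) : ℤ) ∣ j then ((k / d : ℕ) : ℂ) else 0 := by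
        rw [ramanujanSum, sum_filter_coprime_eq_sum_divisors_moebius hk]
        refine sum_congr rfl fun d hd => ?_
        obtain ⟨q, rfl⟩ := Nat.dvd_of_mem_divisors hd
        have hd0 : d ≠ 0 := left_ne_zero_of_mul hk
        rw [sum_filter_dvd_Icc_mul hd0, Nat.mul_div_cancel_left q (Nat.pos_of_ne_zero hd0),
          ← Complex.sum_Icc_exp_eq_ite]
        congr 1
        refine sum_congr rfl fun s _ => ?_
        congr 1
        push_cast
        field_simp
    _ = _ := by
        rw [← Nat.sum_div_divisors k]
        exact sum_congr rfl fun d hd => by rw [Nat.div_div_self (Nat.dvd_of_mem_divisors hd) hk]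

theorem mul_sum_filter_dvd_bernoulli_eval_div {d k m : ℕ} (hdk : d ∣ k) (hk : k ≠ 0)
    (hm : m ≠ 0) :
    (d : ℚ) * ∑ j ∈ range k with d ∣ j, (Polynomial.bernoulli m).eval ((j : ℚ) / k) =
      bernoulli m / k ^ (m - 1) * d ^ m := by
  obtain ⟨q, rfl⟩ := hdk
  have hd : d ≠ 0 := left_ne_zero_of_mul hk
  have hq : q ≠ 0 := right_ne_zero_of_mul hk
  have hraabe := Polynomial.pow_mul_sum_bernoulli_eval_add_div m q 0
  simp only [zero_add, mul_zero, Polynomial.bernoulli_eval_zero] at hraabe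
  rw [sum_filter_dvd_range_mul hd]
  have hdiv : ∀ t : ℕ, ((d * t : ℕ) : ℚ) / ((d * q : ℕ) : ℚ) = t / q := by
    intro t
    push_cast
    field_simp
  simp_rw [hdiv]
  obtain ⟨m, rfl⟩ := Nat.exists_eq_add_one_of_ne_zero hm
  generalize ∑ t ∈ range q, (Polynomial.bernoulli (m + 1)).eval ((t : ℚ) / q) = S
    at hraabe ⊢
  have hS : (q : ℚ) ^ m * S = bernoulli (m + 1) :=
    mul_left_cancel₀ (Nat.cast_ne_zero.2 hq) (by linear_combination hraabe)
  push_cast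
  field_simp
  linear_combination (d : ℚ) ^ (m + 1) * hS

theorem bernoulli_poly_weighted_ramanujan_sum_general (k m : ℕ) (hm : 0 < m) :
    ∑ j ∈ Finset.range k, ((((Polynomial.bernoulli m).eval ((j : ℚ) / (k : ℚ)) : ℚ)) : ℂ) *
        ramanujanSum k j =
      ((bernoulli m : ℂ) / (k : ℂ) ^ (m - 1)) *
        ∑ d ∈ k.divisors, (moebius (k / d) : ℂ) * (d : ℂ) ^ m := by
  simp_rw [ramanujanSum_eq_sum_divisors, mul_sum]
  rw [sum_comm]
  refine sum_congr rfl fun d hd => ?_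
  obtain ⟨hdk, hk⟩ := Nat.mem_divisors.1 hd
  have hdivisor := congrArg (fun x : ℚ => (x : ℂ))
    (mul_sum_filter_dvd_bernoulli_eval_div hdk hk hm.ne')
  push_cast at hdivisor
  simp only [mul_ite, mul_zero, Int.natCast_dvd_natCast]
  rw [← sum_filter, ← sum_mul]
  linear_combination (moebius (k / d) : ℂ) * hdivisor

theorem bernoulli_poly_weighted_ramanujan_sum (k m : ℕ) (hk : 0 < k) (hm : 0 < m) :
    ∑ j ∈ Finset.range k, ((((Polynomial.bernoulli m).eval ((j : ℚ) / (k : ℚ)) : ℚ)) : ℂ) *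
        ramanujanSum k j =
      ((bernoulli m : ℂ) / (k : ℂ) ^ (m - 1)) *
        ∑ d ∈ k.divisors, (moebius (k / d) : ℂ) * (d : ℂ) ^ m :=
  bernoulli_poly_weighted_ramanujan_sum_general k m hm
end
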